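/- Let S be a congruence-free inverse semigroup with zero and K a field. Then the singular ideal I of K₀S is the unique maximal two-sided ideal of K₀S, and K₀S/I is the unique simple quotient of K₀S. -/

import Mathlib

/-- An inverse semigroup with zero. -/
class InverseSemigroup0 (S : Type*) extends Semigroup S, Zero S, Star S where
  zero_mul : ∀ s : S, 0 * s = 0
  mul_zero : ∀ s : S, s * 0 = 0
  mul_star_mul_self : ∀ s : S, s * star s * s = s
  star_mul_self_star : ∀ s : S, star s * s * star s = star s
  star_unique : ∀ s t : S, s * t * s = s → t * s * t = t → t = star s

/-- The natural partial order on an inverse semigroup. -/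
def NatLe {S : Type*} [InverseSemigroup0 S] (a b : S) : Prop := a = b * star a * a

variable (K S : Type*) [CommRing K] [InverseSemigroup0 S]

/-- The ring congruence on the semigroup algebra identifying the zero of `S`
with the zero of the algebra. -/
noncomputable def contractedCon : RingCon (MonoidAlgebra K S) :=
  ringConGen (fun a b => a = MonoidAlgebra.single (0 : S) (1 : K) ∧ b = 0)

/-- The contracted semigroup algebra `K₀S`: the `K`-algebra with basis `S \ {0}`
and multiplication extending that of `S`, realized as the quotient of the semigroup
algebra of `S` by the span of the zero of `S`. -/
abbrev Kzero := (contractedCon K S).Quotient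

/-- The quotient map onto the contracted semigroup algebra. -/
noncomputable def mk0 (a : MonoidAlgebra K S) : Kzero K S :=
  (a : (contractedCon K S).Quotient)

/-- The canonical map `S → K₀S`. -/
noncomputable def iota (s : S) : Kzero K S := mk0 K S (MonoidAlgebra.single s 1)

/-- An element of `K₀S` is singular if for every non-zero idempotent `e` there is a
non-zero idempotent `f ≤ e` with `a f = 0`. -/
noncomputable def Singular (x : Kzero K S) : Prop :=
  ∀ e : S, IsIdempotentElem e → e ≠ 0 →
    ∃ f : S, IsIdempotentElem f ∧ f ≠ 0 ∧ NatLe f e ∧ x * iota K S f = 0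

/-- `J` is a two-sided ideal of the (non-unital) ring `K₀S`. -/
def IsIdealSet (J : Set (Kzero K S)) : Prop :=
  (0 : Kzero K S) ∈ J ∧ (∀ a ∈ J, ∀ b ∈ J, a + b ∈ J) ∧ (∀ a ∈ J, -a ∈ J) ∧
    ∀ a ∈ J, ∀ x : Kzero K S, x * a ∈ J ∧ a * x ∈ J

/-- `S` (non-trivial, with zero) is congruence-free: its only congruences are the
equality relation and the universal relation. -/
def CongruenceFree (S : Type*) [InverseSemigroup0 S] : Prop :=
  (∃ s : S, s ≠ 0) ∧
    ∀ r : S → S → Prop, Equivalence r →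
      (∀ a b c d : S, r a b → r c d → r (a * c) (b * d)) →
      (∀ a b : S, r a b ↔ a = b) ∨ (∀ a b : S, r a b)

/-!
Singular elements form an ideal: each condition `a f = 0` is downward closed and dense below
every nonzero idempotent, and finitely many such conditions can be met simultaneously.

For maximality, let `a` be a non-singular element of a proper ideal, witnessed by `e₀`, and pick
an idempotent `f₀ ≤ e₀` for which `β = a f₀` has as few terms as possible. Minimality makes right
multiplication by every nonzero idempotent `f ≤ f₀` injective and nonvanishing on the support
of `β`; since `E(S)` is 0-disjunctive this forces `u* u = f₀` on the support. Fundamentality then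
shrinks `f₀` to an `f` with `f s* u f = 0` for the support elements `u ≠ s`, so `f s* β f` is a
nonzero multiple of `f`, and 0-simplicity puts all of `K₀S` in the ideal.
-/

namespace InverseSemigroup0

variable {S}

instance : SemigroupWithZero S where
  zero_mul := zero_mul
  mul_zero := mul_zero

instance : InvolutiveStar S where
  star_involutive s := (star_unique (star s) s (star_mul_self_star s) (mul_star_mul_self s)).symm

theorem _root_.IsIdempotentElem.star_eq {e : S} (he : IsIdempotentElem e) : star e = e :=
  (star_unique e e (by rw [he.eq, he.eq]) (by rw [he.eq, he.eq])).symm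

theorem isIdempotentElem_mul_star (s : S) : IsIdempotentElem (s * star s) := by
  rw [IsIdempotentElem, ← mul_assoc, mul_star_mul_self]

theorem isIdempotentElem_star_mul (s : S) : IsIdempotentElem (star s * s) := by
  rw [IsIdempotentElem, ← mul_assoc, star_mul_self_star]

theorem isIdempotentElem_mul {e f : S} (he : IsIdempotentElem e) (hf : IsIdempotentElem f) :
    IsIdempotentElem (e * f) := by
  obtain ⟨x, hx⟩ : ∃ x, star (e * f) = x := ⟨_, rfl⟩
  have hx₁ : e * f * x * (e * f) = e * f := hx ▸ mul_star_mul_self _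
  have hx₂ : x * (e * f) * x = x := hx ▸ star_mul_self_star _
  -- `f x e` is another inverse of `e f`, hence equal to `x`, and it is visibly idempotent.
  have hfxe : f * x * e = x := by
    refine (star_unique _ _ ?_ ?_).trans hx
    · calc e * f * (f * x * e) * (e * f) = e * f * x * (e * f) := by
            simp only [mul_assoc, hf.mul_self_mul, he.mul_self_mul]
        _ = e * f := hx₁
    · calc f * x * e * (e * f) * (f * x * e) = f * (x * (e * f) * x) * e := by
            simp only [mul_assoc, hf.mul_self_mul, he.mul_self_mul]
        _ = f * x * e := by rw [hx₂]
  have hxx : IsIdempotentElem x :=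
    calc x * x = f * x * e * (f * x * e) := by rw [hfxe]
      _ = f * (x * (e * f) * x) * e := by simp only [mul_assoc]
      _ = x := by rw [hx₂, hfxe]
  rwa [IsIdempotentElem, ← star_star (e * f), hx, hxx.star_eq]

theorem _root_.IsIdempotentElem.commute {e f : S} (he : IsIdempotentElem e)
    (hf : IsIdempotentElem f) : Commute e f := by
  have hef := (isIdempotentElem_mul he hf).eq
  have hfe := (isIdempotentElem_mul hf he).eq
  simp only [mul_assoc] at hef hfe
  calc e * f = star (e * f) := (isIdempotentElem_mul he hf).star_eq.symm
    _ = f * e := by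
      refine (star_unique _ _ ?_ ?_).symm
      · simp only [mul_assoc, hf.mul_self_mul, he.mul_self_mul, hef]
      · simp only [mul_assoc, hf.mul_self_mul, he.mul_self_mul, hfe]

instance : StarMul S where
  star_mul s t := by
    have hc := (isIdempotentElem_mul_star t).commute (isIdempotentElem_star_mul s)
    refine (star_unique _ _ ?_ ?_).symm
    · calc s * t * (star t * star s) * (s * t) = s * (t * star t * (star s * s * t)) := by
            simp only [mul_assoc]
        _ = s * (star s * s * (t * star t * t)) := by rw [hc.left_comm]
        _ = s * t := by simp only [← mul_assoc, mul_star_mul_self]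
    · calc star t * star s * (s * t) * (star t * star s)
          = star t * (star s * s * (t * star t * star s)) := by simp only [mul_assoc]
        _ = star t * (t * star t * (star s * s * star s)) := by rw [← hc.left_comm]
        _ = star t * star s := by simp only [← mul_assoc, star_mul_self_star]

theorem star_mul_self_eq_zero {s : S} : star s * s = 0 ↔ s = 0 := by
  refine ⟨fun h => ?_, fun h => by rw [h, mul_zero]⟩
  rw [← mul_star_mul_self s, mul_assoc, h, mul_zero]

theorem mul_star_self_eq_zero {s : S} : s * star s = 0 ↔ s = 0 := by
  refine ⟨fun h => ?_, fun h => by rw [h, zero_mul]⟩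
  rw [← mul_star_mul_self s, h, zero_mul]

theorem natLe_iff {e f : S} (hf : IsIdempotentElem f) : NatLe f e ↔ e * f = f := by
  rw [NatLe, hf.star_eq, mul_assoc, hf.eq, eq_comm]

theorem isIdempotentElem_mul_mul_star {e : S} (he : IsIdempotentElem e) (s : S) :
    IsIdempotentElem (s * e * star s) :=
  calc s * e * star s * (s * e * star s) = s * (e * (star s * s * (e * star s))) := by
        simp only [mul_assoc]
    _ = s * (star s * s * (e * (e * star s))) := by
        rw [(he.commute (isIdempotentElem_star_mul s)).left_comm]
    _ = s * e * star s := by rw [he.mul_self_mul]; simp only [← mul_assoc, mul_star_mul_self]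

theorem mul_mul_star_mul {q : S} (hq : IsIdempotentElem q) (w : S) :
    w * q * star w * w = w * q :=
  calc w * q * star w * w = w * (q * (star w * w)) := by simp only [mul_assoc]
    _ = w * star w * w * q := by
      rw [(hq.commute (isIdempotentElem_star_mul w)).eq]; simp only [mul_assoc]
    _ = w * q := by rw [mul_star_mul_self]

theorem eq_of_star_mul_eq {σ τ g : S} (hg : IsIdempotentElem g) (hσ : σ * g = σ)
    (hτ : τ * g = τ) (h : star σ * τ = g) : σ = τ := by
  have h' : star τ * σ = g := by rw [← hg.star_eq, ← h, star_mul, star_star]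
  have hσ' : σ * star σ * τ = σ := by rw [mul_assoc, h, hσ]
  have hτ' : τ * star τ * σ = τ := by rw [mul_assoc, h', hτ]
  calc σ = σ * star σ * (τ * star τ * σ) := by rw [hτ', hσ']
    _ = τ * star τ * (σ * star σ * σ) :=
        ((isIdempotentElem_mul_star σ).commute (isIdempotentElem_mul_star τ)).left_comm σ
    _ = τ := by rw [mul_star_mul_self, hτ']

theorem mul_eq_mul_of_mul_star_mul_mul_eq {s t g : S} (hg : IsIdempotentElem g)
    (h : g * (star s * t) * g = g) : s * g = t * g :=
  eq_of_star_mul_eq hg (by rw [mul_assoc, hg.eq]) (by rw [mul_assoc, hg.eq])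
    (by rw [star_mul, hg.star_eq]; simpa only [mul_assoc] using h)

-- For idempotents, `e * f = f` says that `f ≤ e` in the natural partial order.
def IsDenseBelow (P : S → Prop) (e : S) : Prop :=
  ∀ g, IsIdempotentElem g → g ≠ 0 → e * g = g →
    ∃ f, IsIdempotentElem f ∧ f ≠ 0 ∧ g * f = f ∧ P f

def IsDownwardClosed (P : S → Prop) : Prop :=
  ∀ f g, IsIdempotentElem f → IsIdempotentElem g → f * g = g → P f → P g

theorem IsDenseBelow.exists {P : S → Prop} {e : S} (h : IsDenseBelow P e)
    (he : IsIdempotentElem e) (he0 : e ≠ 0) :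
    ∃ f, IsIdempotentElem f ∧ f ≠ 0 ∧ e * f = f ∧ P f :=
  h e he he0 he.eq

theorem IsDenseBelow.mono {P Q : S → Prop} {e : S} (h : IsDenseBelow P e)
    (hPQ : ∀ f, P f → Q f) : IsDenseBelow Q e := fun g hg hg0 heg =>
  let ⟨f, hf, hf0, hgf, hPf⟩ := h g hg hg0 heg
  ⟨f, hf, hf0, hgf, hPQ f hPf⟩

theorem IsDenseBelow.and {P Q : S → Prop} {e : S} (hP : IsDenseBelow P e)
    (hQ : IsDenseBelow Q e) (hPc : IsDownwardClosed P) :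
    IsDenseBelow (fun f => P f ∧ Q f) e := by
  intro g hg hg0 heg
  obtain ⟨f, hf, hf0, hgf, hPf⟩ := hP g hg hg0 heg
  obtain ⟨f', hf', hf'0, hff', hQf'⟩ := hQ f hf hf0 (by rw [← hgf, ← mul_assoc, heg])
  exact ⟨f', hf', hf'0, by rw [← hff', ← mul_assoc, hgf], hPc f f' hf hf' hff' hPf, hQf'⟩

theorem isDenseBelow_forall_mem {ι : Type*} (s : Finset ι) {P : ι → S → Prop} {e : S}
    (hdense : ∀ i ∈ s, IsDenseBelow (P i) e) (hclosed : ∀ i ∈ s, IsDownwardClosed (P i)) :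
    IsDenseBelow (fun f => ∀ i ∈ s, P i f) e := by
  classical
  induction s using Finset.induction_on with
  | empty => exact fun g hg hg0 _ => ⟨g, hg, hg0, hg.eq, by simp⟩
  | insert i s _ ih =>
    simp only [Finset.mem_insert, forall_eq_or_imp] at hdense hclosed ⊢
    exact hdense.1.and (ih hdense.2 hclosed.2) hclosed.1

end InverseSemigroup0

namespace CongruenceFree

open InverseSemigroup0 hiding zero_mul mul_zero

variable {S}

theorem eq_of_con (hcf : CongruenceFree S) (c : Con S) {x y : S} (hxy : ¬c x y) {a b : S}
    (hab : c a b) : a = b := by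
  rcases hcf.2 c c.iseqv (fun _ _ _ _ => c.mul) with h | h
  · exact (h a b).1 hab
  · exact absurd (h x y) hxy

theorem eq_of_forall_mul_mul_eq_zero_iff (hcf : CongruenceFree S) {a b : S}
    (h : ∀ u v : S, u * a * v = 0 ↔ u * b * v = 0) : a = b := by
  obtain ⟨s, hs⟩ := hcf.1
  let c : Con S :=
    { r := fun x y => ∀ u v : S, u * x * v = 0 ↔ u * y * v = 0
      iseqv := ⟨fun _ _ _ => Iff.rfl, fun h u v => (h u v).symm,
        fun h₁ h₂ u v => (h₁ u v).trans (h₂ u v)⟩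
      mul' := fun {x y z w} hxy hzw u v => by
        have h₁ := hxy u (z * v)
        have h₂ := hzw (u * y) v
        simp only [mul_assoc] at h₁ h₂ ⊢
        exact h₁.trans h₂ }
  refine hcf.eq_of_con c (x := s) (y := 0) (fun hs0 => hs ?_) h
  have := (hs0 (s * star s) (star s * s)).2 (by rw [mul_zero, zero_mul])
  simpa only [← mul_assoc, mul_star_mul_self] using this

theorem eq_of_forall_mul_ne_zero (hcf : CongruenceFree S) {f g : S} (hf : IsIdempotentElem f)
    (hg : IsIdempotentElem g) (hfg : f * g = g)
    (h : ∀ e, IsIdempotentElem e → e ≠ 0 → f * e = e → e * g ≠ 0) : g = f := by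
  refine hcf.eq_of_forall_mul_mul_eq_zero_iff fun u v => ⟨fun hz => ?_, fun hz => ?_⟩
  · have hA := isIdempotentElem_star_mul u
    have hB := isIdempotentElem_mul_star v
    by_contra hne
    -- The idempotent `f (u* u) (v v*)` lies below `f` and is annihilated by `g`.
    refine h (f * (star u * u) * (v * star v))
      (isIdempotentElem_mul (isIdempotentElem_mul hf hA) hB) (fun he0 => hne ?_)
      (by simp only [← mul_assoc, hf.eq]) ?_
    · calc u * f * v = u * star u * u * f * (v * star v * v) := by
            rw [mul_star_mul_self, mul_star_mul_self]
        _ = u * (star u * u * f) * (v * star v * v) := by simp only [mul_assoc]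
        _ = u * (f * (star u * u) * (v * star v)) * v := by
            rw [← (hf.commute hA).eq]; simp only [mul_assoc]
        _ = 0 := by rw [he0, mul_zero, zero_mul]
    · calc f * (star u * u) * (v * star v) * g = star u * (u * (f * g) * v) * star v := by
            rw [mul_assoc _ (v * star v), (hB.commute hg).eq, (hf.commute hA).eq]
            simp only [mul_assoc]
        _ = 0 := by rw [hfg, hz, mul_zero, zero_mul]
  · calc u * g * v = u * f * (g * (v * star v * v)) := by
          rw [mul_star_mul_self, ← hfg]; simp only [mul_assoc, hf.mul_self_mul]
      _ = u * f * v * (star v * g * v) := by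
          rw [← mul_assoc g, ← (isIdempotentElem_mul_star v).commute hg |>.eq]
          simp only [mul_assoc]
      _ = 0 := by rw [hz, zero_mul]

theorem exists_mul_eq_zero_of_ne (hcf : CongruenceFree S) {f g : S} (hf : IsIdempotentElem f)
    (hg : IsIdempotentElem g) (hfg : f * g = g) (hne : g ≠ f) :
    ∃ e, IsIdempotentElem e ∧ e ≠ 0 ∧ f * e = e ∧ e * g = 0 := by
  by_contra! h
  exact hne (hcf.eq_of_forall_mul_ne_zero hf hg hfg h)

theorem eq_of_forall_mul_mul_star_eq (hcf : CongruenceFree S) {a b : S}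
    (h : ∀ e, IsIdempotentElem e → a * e * star a = b * e * star b) : a = b := by
  obtain ⟨s, hs⟩ := hcf.1
  let c : Con S :=
    { r := fun x y => ∀ e, IsIdempotentElem e → x * e * star x = y * e * star y
      iseqv := ⟨fun _ _ _ => rfl, fun h e he => (h e he).symm,
        fun h₁ h₂ e he => (h₁ e he).trans (h₂ e he)⟩
      mul' := fun {x y z w} hxy hzw e he =>
        calc x * z * e * star (x * z) = x * (z * e * star z) * star x := by
              simp only [star_mul, mul_assoc]
          _ = y * (w * e * star w) * star y := by
              rw [hzw e he, hxy _ (isIdempotentElem_mul_mul_star he w)]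
          _ = y * w * e * star (y * w) := by simp only [star_mul, mul_assoc] }
  refine hcf.eq_of_con c (x := s) (y := 0) (fun hs0 => hs ?_) h
  have := hs0 (star s * s) (isIdempotentElem_star_mul s)
  rw [zero_mul, zero_mul, ← mul_assoc, mul_star_mul_self] at this
  exact mul_star_self_eq_zero.1 this

theorem exists_eq_mul_mul (hcf : CongruenceFree S) {c : S} (hc : c ≠ 0) (t : S) :
    ∃ u v, t = u * c * v := by
  let I : S → Prop := fun x => ∃ u v, x = u * c * v
  have hIc : I c := ⟨c * star c, star c * c, by simp only [← mul_assoc, mul_star_mul_self]⟩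
  have hI0 : I 0 := ⟨0, 0, by rw [zero_mul, zero_mul]⟩
  have hI_mul_left : ∀ x y, I y → I (x * y) := fun x _ ⟨u, v, hy⟩ =>
    ⟨x * u, v, by rw [hy]; simp only [mul_assoc]⟩
  have hI_mul_right : ∀ x y, I x → I (x * y) := fun _ y ⟨u, v, hx⟩ =>
    ⟨u, v * y, by rw [hx]; simp only [mul_assoc]⟩
  -- the Rees congruence of the ideal `S¹ c S¹`
  let r : Con S :=
    { r := fun x y => x = y ∨ (I x ∧ I y)
      iseqv := ⟨fun _ => Or.inl rfl, fun h => h.imp Eq.symm And.symm, by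
        rintro x y z (rfl | ⟨hx, hy⟩) (rfl | ⟨hy', hz⟩)
        exacts [Or.inl rfl, Or.inr ⟨hy', hz⟩, Or.inr ⟨hx, hy⟩, Or.inr ⟨hx, hz⟩]⟩
      mul' := by
        rintro x y z w (rfl | ⟨hx, hy⟩) (rfl | ⟨hz, hw⟩)
        exacts [Or.inl rfl, Or.inr ⟨hI_mul_left _ _ hz, hI_mul_left _ _ hw⟩,
          Or.inr ⟨hI_mul_right _ _ hx, hI_mul_right _ _ hy⟩,
          Or.inr ⟨hI_mul_right _ _ hx, hI_mul_right _ _ hy⟩] }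
  by_contra ht
  refine hc (hcf.eq_of_con r (x := t) (y := c) ?_ (Or.inr ⟨hIc, hI0⟩))
  rintro (rfl | ⟨htI, -⟩)
  exacts [ht hIc, ht htI]

theorem star_mul_self_eq (hcf : CongruenceFree S) {u f : S} (hf : IsIdempotentElem f)
    (huf : u * f = u) (h : ∀ e, IsIdempotentElem e → e ≠ 0 → f * e = e → u * e ≠ 0) :
    star u * u = f := by
  have hA := isIdempotentElem_star_mul u
  refine hcf.eq_of_forall_mul_ne_zero hf hA (by rw [(hf.commute hA).eq, mul_assoc, huf])
    fun e he he0 hfe hz => h e he he0 hfe ?_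
  calc u * e = u * (star u * u * e) := by rw [← mul_assoc, ← mul_assoc, mul_star_mul_self]
    _ = u * (e * (star u * u)) := by rw [(hA.commute he).eq]
    _ = 0 := by rw [hz, mul_zero]

theorem exists_mul_mul_eq_zero_of_conj_mul_ne (hcf : CongruenceFree S) {g w q : S}
    (hq : IsIdempotentElem q) (hgq : g * q = q) (hdq : w * q * star w * q ≠ q) :
    ∃ f, IsIdempotentElem f ∧ f ≠ 0 ∧ g * f = f ∧ f * w * f = 0 := by
  have hd := isIdempotentElem_mul_mul_star hq w
  obtain ⟨f, hf, hf0, hqf, hfdq⟩ := hcf.exists_mul_eq_zero_of_ne hq (isIdempotentElem_mul hd hq)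
    (by rw [← mul_assoc, (hq.commute hd).eq, mul_assoc, hq.eq]) hdq
  have hfd : f * (w * q * star w) = 0 := by
    rw [← (hf.commute hq).eq.trans hqf, mul_assoc, (hq.commute hd).eq, hfdq]
  refine ⟨f, hf, hf0, by rw [← hqf, ← mul_assoc, hgq], ?_⟩
  calc f * w * f = f * (w * q * star w * w) * f := by
        rw [mul_mul_star_mul hq, ← hqf]; simp only [mul_assoc, hqf]
    _ = 0 := by rw [← mul_assoc, hfd, zero_mul, zero_mul]

theorem exists_mul_mul_eq_zero_of_mul_conj_ne (hcf : CongruenceFree S) {g w q : S}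
    (hq : IsIdempotentElem q) (hgq : g * q = q) (hqd : q * (w * q * star w) ≠ w * q * star w) :
    ∃ f, IsIdempotentElem f ∧ f ≠ 0 ∧ g * f = f ∧ f * w * f = 0 := by
  have hd := isIdempotentElem_mul_mul_star hq w
  obtain ⟨f, hf, hf0, hdf, hfqd⟩ := hcf.exists_mul_eq_zero_of_ne hd (isIdempotentElem_mul hq hd)
    (by rw [← mul_assoc, (hd.commute hq).eq, mul_assoc, hd.eq]) hqd
  have hfq : f * q = 0 := by
    rw [← (hf.commute hd).eq.trans hdf, mul_assoc, (hd.commute hq).eq, hfqd]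
  have hwwf : w * star w * f = f := by
    rw [← hdf, ← mul_assoc]; simp only [← mul_assoc, mul_star_mul_self]
  -- The witness is `w* f w`, which conjugation by `w` carries back onto `f`.
  have hr := isIdempotentElem_mul_mul_star hf (star w)
  rw [star_star] at hr
  have hwr : w * (star w * f * w) = f * w := by simp only [← mul_assoc, hwwf]
  have hrq : star w * f * w * q = star w * f * w :=
    calc star w * f * w * q = star w * f * (w * q * star w * w) := by
          rw [mul_mul_star_mul hq, mul_assoc]
      _ = star w * (f * (w * q * star w)) * w := by simp only [mul_assoc]
      _ = star w * f * w := by rw [(hf.commute hd).eq.trans hdf]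
  have hqr : q * (star w * f * w) = star w * f * w := (hq.commute hr).eq.trans hrq
  refine ⟨star w * f * w, hr, fun hr0 => hf0 ?_, ?_, ?_⟩
  · calc f = f * (w * star w) := hwwf.symm.trans ((isIdempotentElem_mul_star w).commute hf).eq
      _ = w * (star w * f * w) * star w := by rw [hwr, mul_assoc]
      _ = 0 := by rw [hr0, mul_zero, zero_mul]
  · calc g * (star w * f * w) = g * q * (star w * f * w) := by rw [mul_assoc g q, hqr]
      _ = star w * f * w := by rw [hgq, hqr]
  · have hrf : star w * f * w * f = 0 := by
      rw [← hrq, mul_assoc _ q, (hq.commute hf).eq, hfq, mul_zero]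
    calc star w * f * w * w * (star w * f * w) = star w * f * w * (w * (star w * f * w)) := by
          rw [mul_assoc]
      _ = 0 := by rw [hwr, ← mul_assoc, hrf, zero_mul]

theorem eq_of_forall_mul_mul_ne_zero (hcf : CongruenceFree S) {g w : S}
    (hg : IsIdempotentElem g) (hwg : w * g = w)
    (h : ∀ f, IsIdempotentElem f → f ≠ 0 → g * f = f → f * w * f ≠ 0) : w = g := by
  -- By fundamentality it suffices that conjugation by `w` fixes every idempotent below `g`.
  have key : ∀ q, IsIdempotentElem q → g * q = q → w * q * star w = q := by
    intro q hq hgq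
    by_contra hne
    obtain ⟨f, hf, hf0, hgf, hfwf⟩ :
        ∃ f, IsIdempotentElem f ∧ f ≠ 0 ∧ g * f = f ∧ f * w * f = 0 := by
      by_cases hdq : w * q * star w * q = q
      · refine hcf.exists_mul_mul_eq_zero_of_mul_conj_ne hq hgq fun hqd => hne ?_
        calc w * q * star w = w * q * star w * q := by
              rw [← (hq.commute (isIdempotentElem_mul_mul_star hq w)).eq, hqd]
          _ = q := hdq
      · exact hcf.exists_mul_mul_eq_zero_of_conj_mul_ne hq hgq hdq
    exact h f hf hf0 hgf hfwf
  have hsw : g * star w = star w := by rw [← hg.star_eq, ← star_mul, hwg]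
  refine hcf.eq_of_forall_mul_mul_star_eq fun e he => ?_
  calc w * e * star w = w * g * e * (g * star w) := by rw [hwg, hsw]
    _ = w * (g * e * star g) * star w := by rw [hg.star_eq]; simp only [mul_assoc]
    _ = g * e * star g := key _ (isIdempotentElem_mul_mul_star he g)
        (by rw [hg.star_eq, ← mul_assoc, ← mul_assoc, hg.eq])

theorem exists_separating_idempotent (hcf : CongruenceFree S) {T : Finset S} {f₀ s : S}
    (hf₀ : IsIdempotentElem f₀) (hf₀0 : f₀ ≠ 0) (hfix : ∀ u ∈ T, u * f₀ = u)
    (hrigid : ∀ f, IsIdempotentElem f → f ≠ 0 → f₀ * f = f →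
      Set.InjOn (· * f) T ∧ ∀ u ∈ T, u * f ≠ 0) (hs : s ∈ T) :
    ∃ f, IsIdempotentElem f ∧ f ≠ 0 ∧ f * star s * s * f = f ∧
      ∀ u ∈ T, u ≠ s → f * star s * u * f = 0 := by
  classical
  have hdense : ∀ u ∈ T.erase s, IsDenseBelow (fun f => f * (star s * u) * f = 0) f₀ := by
    intro u hu g hg hg0 hf₀g
    by_contra! hno
    have hw : g * (star s * u) * g = g := by
      refine hcf.eq_of_forall_mul_mul_ne_zero hg (by rw [mul_assoc _ g, hg.eq])
        fun f hf hf0 hgf => ?_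
      have hfg : f * g = f := (hf.commute hg).eq.trans hgf
      simpa only [← mul_assoc, hfg, mul_assoc _ g f, hgf] using hno f hf hf0 hgf
    exact Finset.ne_of_mem_erase hu ((hrigid g hg hg0 hf₀g).1 hs (Finset.mem_of_mem_erase hu)
      (mul_eq_mul_of_mul_star_mul_mul_eq hg hw)).symm
  have hclosed : ∀ u ∈ T.erase s, IsDownwardClosed (fun f => f * (star s * u) * f = 0) := by
    intro u _ f g hf hg hfg h
    calc g * (star s * u) * g = g * f * (star s * u) * (f * g) := by
          rw [(hg.commute hf).eq, hfg]
      _ = 0 := by rw [mul_assoc g f, ← mul_assoc, mul_assoc g, h, mul_zero, zero_mul]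
  obtain ⟨f, hf, hf0, hf₀f, hP⟩ := (isDenseBelow_forall_mem _ hdense hclosed).exists hf₀ hf₀0
  refine ⟨f, hf, hf0, ?_, fun u hu hus => ?_⟩
  · rw [mul_assoc f, hcf.star_mul_self_eq hf₀ (hfix s hs)
      fun e he he0 hf₀e => (hrigid e he he0 hf₀e).2 s hs, (hf.commute hf₀).eq, hf₀f, hf.eq]
  · simpa only [mul_assoc] using hP u (Finset.mem_erase.2 ⟨hus, hu⟩)

end CongruenceFree

section ContractedAlgebra

open MonoidAlgebra
open InverseSemigroup0 hiding zero_mul mul_zero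

variable {K S}

theorem exists_mul_single_zero (x : MonoidAlgebra K S) (k : K) :
    ∃ c, x * single 0 k = single 0 c := by
  induction x using MonoidAlgebra.induction_linear with
  | zero => exact ⟨0, by rw [zero_mul, single_zero]⟩
  | add x y hx hy =>
    obtain ⟨a, ha⟩ := hx
    obtain ⟨b, hb⟩ := hy
    exact ⟨a + b, by rw [add_mul, ha, hb, single_add]⟩
  | single m r => exact ⟨r * k, by rw [single_mul_single, mul_zero]⟩

theorem exists_single_zero_mul (k : K) (x : MonoidAlgebra K S) :
    ∃ c, single 0 k * x = single 0 c := by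
  induction x using MonoidAlgebra.induction_linear with
  | zero => exact ⟨0, by rw [mul_zero, single_zero]⟩
  | add x y hx hy =>
    obtain ⟨a, ha⟩ := hx
    obtain ⟨b, hb⟩ := hy
    exact ⟨a + b, by rw [mul_add, ha, hb, single_add]⟩
  | single m r => exact ⟨k * r, by rw [single_mul_single, zero_mul]⟩

variable (K S) in
def zeroDiffCon : RingCon (MonoidAlgebra K S) where
  r x y := ∃ k, x = y + single 0 k
  iseqv :=
    ⟨fun _ => ⟨0, by rw [single_zero, add_zero]⟩,
      fun ⟨k, h⟩ => ⟨-k, by rw [h, add_assoc, ← single_add, add_neg_cancel, single_zero, add_zero]⟩,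
      fun ⟨k, h⟩ ⟨l, h'⟩ => ⟨l + k, by rw [h, h', add_assoc, ← single_add]⟩⟩
  add' := fun ⟨k, h⟩ ⟨l, h'⟩ => ⟨k + l, by rw [h, h', single_add]; abel⟩
  mul' := by
    rintro - x - z ⟨k, rfl⟩ ⟨l, rfl⟩
    obtain ⟨a, ha⟩ := exists_mul_single_zero x l
    obtain ⟨b, hb⟩ := exists_single_zero_mul k z
    refine ⟨a + b + k * l, ?_⟩
    rw [add_mul, mul_add, mul_add, ha, hb, single_mul_single, mul_zero, single_add, single_add]
    abel

theorem contractedCon_le_zeroDiffCon : contractedCon K S ≤ zeroDiffCon K S :=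
  RingCon.ringConGen_le.2 fun _ _ ⟨ha, hb⟩ => ⟨1, by rw [ha, hb, zero_add]⟩

theorem mk0_mul (x y : MonoidAlgebra K S) : mk0 K S (x * y) = mk0 K S x * mk0 K S y := rfl

variable (K S) in
noncomputable def mk0AddHom : MonoidAlgebra K S →+ Kzero K S where
  toFun := mk0 K S
  map_zero' := rfl
  map_add' _ _ := rfl

theorem mk0_surjective : Function.Surjective (mk0 K S) := Quotient.mk''_surjective

theorem mk0_single_zero (k : K) : mk0 K S (single 0 k) = 0 := by
  have h : contractedCon K S (single 0 1) 0 := RingConGen.Rel.of _ _ ⟨rfl, rfl⟩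
  have := (contractedCon K S).mul ((contractedCon K S).refl (single 0 k)) h
  rw [single_mul_single, mul_zero, mul_one, mul_zero] at this
  exact (RingCon.eq _).2 this

theorem iota_ne_zero [Nontrivial K] {s : S} (hs : s ≠ 0) : iota K S s ≠ 0 := fun h => by
  obtain ⟨k, hk⟩ := contractedCon_le_zeroDiffCon ((RingCon.eq _).1 h)
  have := congrArg (fun x => x.coeff s) hk
  simp [hs] at this

theorem mk0_single_mul_single (s t : S) (k l : K) :
    mk0 K S (single s k) * mk0 K S (single t l) = mk0 K S (single (s * t) (k * l)) := by
  rw [← mk0_mul, single_mul_single]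

theorem iota_mul_iota (s t : S) : iota K S s * iota K S t = iota K S (s * t) := by
  rw [iota, iota, mk0_single_mul_single, mul_one, iota]

open scoped Classical in
noncomputable def support₀ (x : MonoidAlgebra K S) : Finset S := x.coeff.support.erase 0

theorem mk0_eq_sum (x : MonoidAlgebra K S) :
    mk0 K S x = ∑ s ∈ support₀ x, mk0 K S (single s (x.coeff s)) := by
  classical
  calc mk0 K S x = mk0AddHom K S (∑ s ∈ x.coeff.support, single s (x.coeff s)) := by
        rw [← Finsupp.sum, sum_coeff_single]; rfl
    _ = ∑ s ∈ x.coeff.support, mk0 K S (single s (x.coeff s)) := map_sum _ _ _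
    _ = _ := (Finset.sum_erase _ (f := fun s => mk0 K S (single s (x.coeff s)))
        (mk0_single_zero _)).symm

theorem exists_mem_support₀_mul_eq {x : MonoidAlgebra K S} {f s : S}
    (hs : s ∈ support₀ (x * single f 1)) : ∃ u ∈ support₀ x, u * f = s := by
  classical
  obtain ⟨hs0, hsupp⟩ := Finset.mem_erase.1 hs
  obtain ⟨u, hu, rfl⟩ := Finset.mem_image.1 (support_coeff_mul_single_subset x 1 f hsupp)
  refine ⟨u, Finset.mem_erase.2 ⟨?_, hu⟩, rfl⟩
  rintro rfl
  exact hs0 (zero_mul f)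

theorem coeff_ne_zero_of_mem_support₀ {x : MonoidAlgebra K S} {s : S} (hs : s ∈ support₀ x) :
    x.coeff s ≠ 0 := by
  classical
  exact Finsupp.mem_support_iff.1 (Finset.mem_of_mem_erase hs)

theorem injOn_and_mul_ne_zero_of_card_le {x : MonoidAlgebra K S} {f : S}
    (h : (support₀ x).card ≤ (support₀ (x * single f 1)).card) :
    Set.InjOn (· * f) (support₀ x) ∧ ∀ u ∈ support₀ x, u * f ≠ 0 := by
  classical
  have hsub : support₀ (x * single f 1) ⊆ (support₀ x).image (· * f) := fun s hs =>
    Finset.mem_image.2 (exists_mem_support₀_mul_eq hs)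
  have himage : ((support₀ x).image (· * f)).card ≤ (support₀ x).card := Finset.card_image_le
  have heq := Finset.eq_of_subset_of_card_le hsub (himage.trans h)
  refine ⟨Finset.card_image_iff.1 (le_antisymm himage (h.trans (Finset.card_le_card hsub))),
    fun u hu hu0 => ?_⟩
  have h0 : (0 : S) ∈ support₀ (x * single f 1) := heq ▸ Finset.mem_image.2 ⟨u, hu, hu0⟩
  exact Finset.notMem_erase 0 _ h0

theorem exists_min_card_support₀ (x : MonoidAlgebra K S) {e : S} (he : IsIdempotentElem e)
    (he0 : e ≠ 0) :
    ∃ f₀, IsIdempotentElem f₀ ∧ f₀ ≠ 0 ∧ e * f₀ = f₀ ∧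
      ∀ f, IsIdempotentElem f → f ≠ 0 → f₀ * f = f →
        (support₀ (x * single f₀ 1)).card ≤ (support₀ (x * single f₀ 1 * single f 1)).card := by
  obtain ⟨f₀, ⟨hf₀, hf₀0, hef₀⟩, hmin⟩ :=
    (InvImage.wf (fun f => (support₀ (x * single f 1)).card) wellFounded_lt).has_min
      {f | IsIdempotentElem f ∧ f ≠ 0 ∧ e * f = f} ⟨e, he, he0, he.eq⟩
  refine ⟨f₀, hf₀, hf₀0, hef₀, fun f hf hf0 hf₀f => ?_⟩
  rw [mul_assoc, single_mul_single, hf₀f, mul_one]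
  exact not_lt.1 (hmin f ⟨hf, hf0, by rw [← hf₀f, ← mul_assoc, hef₀]⟩)

theorem iota_mul_mk0_mul_iota (x y : S) (β : MonoidAlgebra K S) :
    iota K S x * mk0 K S β * iota K S y =
      ∑ u ∈ support₀ β, mk0 K S (single (x * u * y) (β.coeff u)) := by
  rw [mk0_eq_sum β, Finset.mul_sum, Finset.sum_mul]
  refine Finset.sum_congr rfl fun u _ => ?_
  rw [iota, iota, mk0_single_mul_single, mk0_single_mul_single, one_mul, mul_one]

end ContractedAlgebra

section SingularIdeal

open MonoidAlgebra
open InverseSemigroup0 hiding zero_mul mul_zero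

variable {K S}

namespace IsIdealSet

variable {J : Set (Kzero K S)}

theorem mul_mem_left (hJ : IsIdealSet K S J) (x : Kzero K S) {a : Kzero K S} (ha : a ∈ J) :
    x * a ∈ J :=
  (hJ.2.2.2 a ha x).1

theorem mul_mem_right (hJ : IsIdealSet K S J) {a : Kzero K S} (ha : a ∈ J) (x : Kzero K S) :
    a * x ∈ J :=
  (hJ.2.2.2 a ha x).2

theorem sum_mem (hJ : IsIdealSet K S J) {ι : Type*} (s : Finset ι) {f : ι → Kzero K S}
    (h : ∀ i ∈ s, f i ∈ J) : ∑ i ∈ s, f i ∈ J :=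
  Finset.sum_induction f (· ∈ J) (fun a b ha hb => hJ.2.1 a ha b hb) hJ.1 h

theorem iota_mem_of_single_mem (hJ : IsIdealSet K S J) {f : S} (hf : IsIdempotentElem f) {k : K}
    (hk : IsUnit k) (h : mk0 K S (single f k) ∈ J) : iota K S f ∈ J := by
  have := hJ.mul_mem_right h (mk0 K S (single f ↑hk.unit⁻¹))
  rwa [mk0_single_mul_single, hf.eq, hk.mul_val_inv] at this

theorem eq_univ_of_iota_mem (hJ : IsIdealSet K S J) (hcf : CongruenceFree S) {c : S} (hc : c ≠ 0)
    (hcJ : iota K S c ∈ J) : J = Set.univ := by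
  refine Set.eq_univ_of_forall fun z => ?_
  obtain ⟨x, rfl⟩ := mk0_surjective z
  rw [mk0_eq_sum]
  refine hJ.sum_mem _ fun t _ => ?_
  obtain ⟨u, v, rfl⟩ := hcf.exists_eq_mul_mul hc t
  rw [← mul_one (x.coeff _), ← mul_one (x.coeff _ * 1), ← mk0_single_mul_single,
    ← mk0_single_mul_single]
  exact hJ.mul_mem_right (hJ.mul_mem_left _ hcJ) _

end IsIdealSet

theorem singular_iff (x : Kzero K S) :
    Singular K S x ↔ ∀ e, IsIdempotentElem e → e ≠ 0 →
      ∃ f, IsIdempotentElem f ∧ f ≠ 0 ∧ e * f = f ∧ x * iota K S f = 0 := by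
  refine forall₃_congr fun e _ _ => exists_congr fun f => ?_
  exact ⟨fun ⟨hf, hf0, hfe, h⟩ => ⟨hf, hf0, (natLe_iff hf).1 hfe, h⟩,
    fun ⟨hf, hf0, hef, h⟩ => ⟨hf, hf0, (natLe_iff hf).2 hef, h⟩⟩

theorem Singular.isDenseBelow {x : Kzero K S} (hx : Singular K S x) (e : S) :
    IsDenseBelow (fun f => x * iota K S f = 0) e := fun g hg hg0 _ =>
  (singular_iff x).1 hx g hg hg0

theorem singular_of_forall_isDenseBelow {x : Kzero K S}
    (h : ∀ e, IsDenseBelow (fun f => x * iota K S f = 0) e) : Singular K S x :=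
  (singular_iff x).2 fun e he he0 => (h e).exists he he0

theorem isDownwardClosed_mul_iota_eq_zero (x : Kzero K S) :
    IsDownwardClosed (fun f => x * iota K S f = 0) := fun f g _ _ hfg (h : x * iota K S f = 0) =>
  show x * iota K S g = 0 by rw [← hfg, ← iota_mul_iota, ← mul_assoc, h, zero_mul]

theorem Singular.isDenseBelow_mul_single {a : Kzero K S} (ha : Singular K S a) (s e : S) :
    IsDenseBelow (fun f => ∀ k, a * mk0 K S (single (s * f) k) = 0) e := by
  intro g hg hg0 _
  by_cases hsg : s * g = 0
  · exact ⟨g, hg, hg0, hg.eq, fun k => by rw [hsg, mk0_single_zero, mul_zero]⟩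
  -- Shrink `g` to `τ* h τ` for an idempotent `h ≤ τ τ*` killed by `a`, where `τ = s g`.
  obtain ⟨τ, hsτ⟩ : ∃ τ, s * g = τ := ⟨_, rfl⟩
  rw [hsτ] at hsg
  have hτ := isIdempotentElem_mul_star τ
  obtain ⟨h, hh, hh0, hτh, hah⟩ :=
    (ha.isDenseBelow (τ * star τ)).exists hτ (mul_star_self_eq_zero.not.2 hsg)
  have hgτ : g * star τ = star τ := by rw [← hsτ, star_mul, hg.star_eq, ← mul_assoc, hg.eq]
  have hle : g * (star τ * h * τ) = star τ * h * τ := by rw [← mul_assoc, ← mul_assoc, hgτ]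
  refine ⟨star τ * h * τ, by simpa using isIdempotentElem_mul_mul_star hh (star τ),
    fun h0 => hh0 ?_, hle, fun k => ?_⟩
  · calc h = τ * star τ * h * (τ * star τ) := by rw [hτh, (hh.commute hτ).eq, hτh]
      _ = τ * (star τ * h * τ) * star τ := by simp only [mul_assoc]
      _ = 0 := by rw [h0, mul_zero, zero_mul]
  · calc a * mk0 K S (single (s * (star τ * h * τ)) k) = a * mk0 K S (single (h * τ) k) := by
          rw [← hle, ← mul_assoc s, hsτ, ← mul_assoc, ← mul_assoc, hτh]
      _ = a * iota K S h * mk0 K S (single τ k) := by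
          rw [mul_assoc, iota, mk0_single_mul_single, one_mul]
      _ = 0 := by rw [hah, zero_mul]

theorem Singular.mul_right {a : Kzero K S} (ha : Singular K S a) (x : Kzero K S) :
    Singular K S (a * x) := by
  obtain ⟨ξ, rfl⟩ := mk0_surjective x
  refine singular_of_forall_isDenseBelow fun e => (isDenseBelow_forall_mem (support₀ ξ)
    (fun s _ => ha.isDenseBelow_mul_single s e) fun s _ f g _ _ hfg h k => ?_).mono
    fun f hf => ?_
  · rw [← hfg, ← mul_assoc, ← mul_one k, ← mk0_single_mul_single, ← mul_assoc, h, zero_mul]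
  · rw [mk0_eq_sum ξ, Finset.mul_sum, Finset.sum_mul]
    refine Finset.sum_eq_zero fun s hs => ?_
    rw [mul_assoc, iota, mk0_single_mul_single, mul_one]
    exact hf s hs _

theorem isIdealSet_singular : IsIdealSet K S {x | Singular K S x} := by
  refine ⟨singular_of_forall_isDenseBelow fun e g hg hg0 _ => ⟨g, hg, hg0, hg.eq, zero_mul _⟩,
    fun a ha b hb => singular_of_forall_isDenseBelow fun e => ?_,
    fun a ha => singular_of_forall_isDenseBelow fun e => ?_,
    fun a ha x => ⟨singular_of_forall_isDenseBelow fun e => ?_, Singular.mul_right ha x⟩⟩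
  · exact ((Singular.isDenseBelow ha e).and (Singular.isDenseBelow hb e)
      (isDownwardClosed_mul_iota_eq_zero a)).mono fun f ⟨h₁, h₂⟩ => by
        rw [add_mul, h₁, h₂, add_zero]
  · exact (Singular.isDenseBelow ha e).mono fun f h => (neg_mul a _).trans (by rw [h, neg_zero])
  · exact (Singular.isDenseBelow ha e).mono fun f h => by rw [mul_assoc, h, mul_zero]

theorem not_singular_iota [Nontrivial K] {e : S} (he : IsIdempotentElem e) (he0 : e ≠ 0) :
    ¬Singular K S (iota K S e) := fun h => by
  obtain ⟨f, -, hf0, hef, hz⟩ := (h.isDenseBelow e).exists he he0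
  rw [iota_mul_iota, hef] at hz
  exact iota_ne_zero hf0 hz

theorem exists_single_mem_of_not_singular (hcf : CongruenceFree S) {J : Set (Kzero K S)}
    (hJ : IsIdealSet K S J) {a : Kzero K S} (ha : a ∈ J) (hsing : ¬Singular K S a) :
    ∃ f k, IsIdempotentElem f ∧ f ≠ 0 ∧ k ≠ 0 ∧ mk0 K S (single f k) ∈ J := by
  obtain ⟨α, rfl⟩ := mk0_surjective a
  rw [singular_iff] at hsing
  push Not at hsing
  obtain ⟨e₀, he₀, he₀0, hne⟩ := hsing
  obtain ⟨f₀, hf₀, hf₀0, he₀f₀, hmin⟩ := exists_min_card_support₀ α he₀ he₀0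
  set β := α * single f₀ 1
  have hfix : ∀ u ∈ support₀ β, u * f₀ = u := fun u hu => by
    obtain ⟨v, -, rfl⟩ := exists_mem_support₀_mul_eq hu
    rw [mul_assoc, hf₀.eq]
  obtain ⟨s, hs⟩ : (support₀ β).Nonempty := by
    refine Finset.nonempty_iff_ne_empty.2 fun h => hne f₀ hf₀ hf₀0 he₀f₀ ?_
    rw [iota, ← mk0_mul, mk0_eq_sum, h, Finset.sum_empty]
  obtain ⟨f, hf, hf0, hss, hsu⟩ := hcf.exists_separating_idempotent hf₀ hf₀0 hfix
    (fun f hf hf0 hf₀f => injOn_and_mul_ne_zero_of_card_le (hmin f hf hf0 hf₀f)) hs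
  refine ⟨f, β.coeff s, hf, hf0, coeff_ne_zero_of_mem_support₀ hs, ?_⟩
  have hsep : iota K S (f * star s) * mk0 K S β * iota K S f = mk0 K S (single f (β.coeff s)) := by
    rw [iota_mul_mk0_mul_iota, Finset.sum_eq_single s
      (fun u hu hus => by rw [hsu u hu hus, mk0_single_zero])
      (fun h => absurd hs h), hss]
  have hβJ : mk0 K S β ∈ J := hJ.mul_mem_right ha (iota K S f₀)
  rw [← hsep]
  exact hJ.mul_mem_right (hJ.mul_mem_left _ hβJ) _

end SingularIdeal

/-- For a congruence-free inverse semigroup with zero and a field `K`, the singular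
ideal is the unique maximal two-sided ideal of `K₀S`: it is a proper ideal containing
every proper ideal (so `K₀S` modulo the singular ideal is the unique simple quotient). -/
theorem stmt14 (K S : Type*) [Field K] [InverseSemigroup0 S] (hcf : CongruenceFree S) :
    IsIdealSet K S {x : Kzero K S | Singular K S x} ∧
    {x : Kzero K S | Singular K S x} ≠ Set.univ ∧
    ∀ J : Set (Kzero K S), IsIdealSet K S J → J ≠ Set.univ →
      J ⊆ {x : Kzero K S | Singular K S x} := by
  refine ⟨isIdealSet_singular, fun h => ?_, fun J hJ hJne a ha => ?_⟩
  · obtain ⟨s, hs⟩ := hcf.1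
    exact not_singular_iota (K := K) (InverseSemigroup0.isIdempotentElem_star_mul s)
      (InverseSemigroup0.star_mul_self_eq_zero.not.2 hs) (Set.eq_univ_iff_forall.1 h _)
  · by_contra hsing
    obtain ⟨f, k, hf, hf0, hk, hJf⟩ := exists_single_mem_of_not_singular hcf hJ ha hsing
    exact hJne (hJ.eq_univ_of_iota_mem hcf hf0 (hJ.iota_mem_of_single_mem hf hk.isUnit hJf))
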